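/- arXiv:2107.00267 — 5 statements merged into one kernel-verified Lean document; each statement's English description precedes it below -/
import Mathlib

section
/- In a quasitriangular Hopf algebra A with R-matrix ρ = Σ e⊗e', for all a ∈ A: Σ ae ⊗ e' = Σ ea₂ ⊗ s(a₁)e'a₃ (using Sweedler notation for the iterated coproduct of a). -/
open scoped TensorProduct
open Coalgebra HopfAlgebra

set_option maxHeartbeats 1000000
set_option synthInstance.maxHeartbeats 400000

section Aux

variable {k : Type*} [Field k] {A : Type*} [Ring A] [HopfAlgebra k A]

/-- `x ⊗ t ↦ (1 ⊗ s(x)) * ρ * t`. -/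
noncomputable def beadL (ρ : A ⊗[k] A) : A ⊗[k] (A ⊗[k] A) →ₗ[k] A ⊗[k] A :=
  TensorProduct.lift ((LinearMap.mul k (A ⊗[k] A)) ∘ₗ LinearMap.mulRight k ρ ∘ₗ
    (TensorProduct.mk k A A 1) ∘ₗ (antipode (R := k) (A := A)))

@[simp] lemma beadL_tmul (ρ : A ⊗[k] A) (x : A) (t : A ⊗[k] A) :
    beadL ρ (x ⊗ₜ[k] t) = ((1 : A) ⊗ₜ[k] (antipode (R := k) x)) * ρ * t := rfl

/-- `x ⊗ (u ⊗ v) ↦ (v ⊗ s(x) u) * ρ`. -/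
noncomputable def beadN (ρ : A ⊗[k] A) : A ⊗[k] (A ⊗[k] A) →ₗ[k] A ⊗[k] A :=
  LinearMap.mulRight k ρ ∘ₗ (TensorProduct.comm k A A).toLinearMap ∘ₗ
    ((LinearMap.mul' k A ∘ₗ (antipode (R := k) (A := A)).rTensor A).rTensor A) ∘ₗ
    (TensorProduct.assoc k A A A).symm.toLinearMap

@[simp] lemma beadN_tmul (ρ : A ⊗[k] A) (x u v : A) :
    beadN ρ (x ⊗ₜ[k] (u ⊗ₜ[k] v)) = (v ⊗ₜ[k] (antipode (R := k) x * u)) * ρ := rfl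

lemma beadN_tmul' (ρ : A ⊗[k] A) (x : A) (t : A ⊗[k] A) :
    beadN ρ (x ⊗ₜ[k] t)
      = ((1 : A) ⊗ₜ[k] (antipode (R := k) x)) * (TensorProduct.comm k A A) t * ρ := by
  induction t with
  | zero => simp
  | tmul u v => simp [Algebra.TensorProduct.tmul_mul_tmul]
  | add t₁ t₂ h₁ h₂ =>
      rw [TensorProduct.tmul_add, map_add, h₁, h₂, map_add, mul_add, add_mul]

end Aux

/-- Bead push identity 1: `∑ a e ⊗ e' = ∑ e a₂ ⊗ s(a₁) e' a₃`. -/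
theorem bead_push_one
    {k : Type*} [Field k] {A : Type*} [Ring A] [HopfAlgebra k A]
    {ι : Type*} [Fintype ι] (e e' : ι → A)
    (ρ : A ⊗[k] A) (hρ : ρ = ∑ j, e j ⊗ₜ[k] e' j)
    -- intertwining: ρ Δ(x) = Δᵒᵖ(x) ρ
    (h1 : ∀ x : A, ρ * Coalgebra.comul x
        = (TensorProduct.comm k A A) (Coalgebra.comul x) * ρ)
    (a : A) {κ : Type*} [Fintype κ] (a1 a2 a3 : κ → A)
    -- Δ²(a) = ∑ i, a₁ ⊗ a₂ ⊗ a₃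
    (ha : (TensorProduct.map (Coalgebra.comul (R := k)) LinearMap.id) (Coalgebra.comul a)
        = ∑ i, (a1 i ⊗ₜ[k] a2 i) ⊗ₜ[k] a3 i) :
    ∑ j, (a * e j) ⊗ₜ[k] e' j
      = ∑ i, ∑ j, (e j * a2 i) ⊗ₜ[k]
          (HopfAlgebra.antipode (R := k) (a1 i) * e' j * a3 i) := by
  classical
  have ha' : (Coalgebra.comul (R := k) (A := A)).rTensor A (Coalgebra.comul a)
      = ∑ i, (a1 i ⊗ₜ[k] a2 i) ⊗ₜ[k] a3 i := ha
  -- coassociated form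
  have key2 : (Coalgebra.comul (R := k) (A := A)).lTensor A (Coalgebra.comul a)
      = ∑ i, a1 i ⊗ₜ[k] (a2 i ⊗ₜ[k] a3 i) := by
    have h := Coalgebra.coassoc_apply (R := k) a
    rw [ha'] at h
    rw [← h, map_sum]
    simp [TensorProduct.assoc_tmul]
  -- antipode identity: ∑ s(a₁) a₂ ⊗ a₃ = 1 ⊗ a
  have key1 : ∑ i, (antipode (R := k) (a1 i) * a2 i) ⊗ₜ[k] a3 i = (1 : A) ⊗ₜ[k] a := by
    have h := congrArg
      ((LinearMap.mul' k A ∘ₗ (antipode (R := k) (A := A)).rTensor A).rTensor A) ha'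
    rw [map_sum] at h
    simp only [LinearMap.rTensor_tmul, LinearMap.comp_apply, LinearMap.mul'_apply] at h
    rw [← h, ← LinearMap.rTensor_comp_apply, LinearMap.comp_assoc,
      HopfAlgebra.mul_antipode_rTensor_comul, LinearMap.rTensor_comp_apply,
      Coalgebra.rTensor_counit_comul]
    simp
  -- L ∘ lTensor comul = N ∘ lTensor comul
  have keyLN : (beadL ρ) ∘ₗ (Coalgebra.comul (R := k) (A := A)).lTensor A
      = (beadN ρ) ∘ₗ (Coalgebra.comul (R := k) (A := A)).lTensor A := by
    apply TensorProduct.ext'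
    intro x y
    simp only [LinearMap.comp_apply, LinearMap.lTensor_tmul, beadL_tmul, beadN_tmul']
    rw [mul_assoc, h1 y, ← mul_assoc]
  calc ∑ j, (a * e j) ⊗ₜ[k] e' j
      = (TensorProduct.comm k A A) ((1 : A) ⊗ₜ[k] a) * ρ := by
        rw [hρ, TensorProduct.comm_tmul, Finset.mul_sum]
        simp [Algebra.TensorProduct.tmul_mul_tmul]
    _ = ∑ i, (a3 i ⊗ₜ[k] (antipode (R := k) (a1 i) * a2 i)) * ρ := by
        rw [← key1, map_sum, Finset.sum_mul]
        simp
    _ = beadN ρ (∑ i, a1 i ⊗ₜ[k] (a2 i ⊗ₜ[k] a3 i)) := by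
        rw [map_sum]; simp
    _ = beadL ρ (∑ i, a1 i ⊗ₜ[k] (a2 i ⊗ₜ[k] a3 i)) := by
        rw [← key2, ← LinearMap.comp_apply, ← keyLN, LinearMap.comp_apply]
    _ = ∑ i, ∑ j, (e j * a2 i) ⊗ₜ[k]
          (HopfAlgebra.antipode (R := k) (a1 i) * e' j * a3 i) := by
        rw [map_sum]
        refine Finset.sum_congr rfl fun i _ => ?_
        rw [beadL_tmul, hρ, Finset.mul_sum, Finset.sum_mul]
        refine Finset.sum_congr rfl fun j _ => ?_
        simp [Algebra.TensorProduct.tmul_mul_tmul, mul_assoc]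
end

section
/- In a quasitriangular Hopf algebra A with R-matrix ρ = Σ e⊗e', for all a ∈ A: Σ e ⊗ ae' = Σ s⁻¹(a₃)ea₁ ⊗ e'a₂. -/
/-!
Apply the intertwining relation `ρ Δ(x) = Δᵒᵖ(x) ρ` to the first two legs of `Δ²(a)`:
`∑ e a₁ ⊗ e' a₂ ⊗ a₃ = ∑ a₂ e ⊗ a₁ e' ⊗ a₃`. Multiplying the third leg back onto the first as
`s⁻¹(a₃)` turns the left side into the right side of the claim and the right side into
`(∑ s⁻¹(a₃) a₂ ⊗ a₁) ρ`. By coassociativity and the antipode axiom transported through `s⁻¹`,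
`∑ s⁻¹(x₂) x₁ = ε(x) 1`, so `∑ s⁻¹(a₃) a₂ ⊗ a₁ = 1 ⊗ a` and this is `∑ e ⊗ a e'`.
-/

open scoped TensorProduct
open Coalgebra HopfAlgebra

namespace TensorProduct

variable {R B M : Type*} [CommSemiring R] [Semiring B] [Algebra R B] [AddCommMonoid M]
  [Module R M]

noncomputable def mulLeftBy (f : M →ₗ[R] B) : B ⊗[R] M →ₗ[R] B :=
  lift ((LinearMap.mul R B).flip.compl₂ f)

@[simp]
lemma mulLeftBy_tmul (f : M →ₗ[R] B) (b : B) (m : M) : mulLeftBy f (b ⊗ₜ m) = f m * b := rfl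

end TensorProduct

lemma sum_mul_tmul_tmul_eq_sum_tmul_mul_tmul {R A : Type*} [CommSemiring R] [Semiring A]
    [Bialgebra R A] {ρ : A ⊗[R] A}
    (hρ : ∀ x : A, ρ * comul x = TensorProduct.comm R A A (comul x) * ρ)
    (a : A) {κ : Type*} [Fintype κ] (a1 a2 a3 : κ → A)
    (ha : TensorProduct.map (comul (R := R)) LinearMap.id (comul a)
        = ∑ i, (a1 i ⊗ₜ[R] a2 i) ⊗ₜ[R] a3 i) :
    ∑ i, (ρ * (a1 i ⊗ₜ[R] a2 i)) ⊗ₜ[R] a3 i = ∑ i, ((a2 i ⊗ₜ[R] a1 i) * ρ) ⊗ₜ[R] a3 i := by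
  have hcomul : LinearMap.mulLeft R ρ ∘ₗ comul
      = LinearMap.mulRight R ρ ∘ₗ (TensorProduct.comm R A A).toLinearMap ∘ₗ comul :=
    LinearMap.ext hρ
  have := congrArg (fun f ↦ f.rTensor A (comul a)) hcomul
  simp only [LinearMap.rTensor_comp, LinearMap.comp_apply] at this
  simpa [show comul.rTensor A (comul a) = _ from ha] using this

namespace HopfAlgebra

variable {R A : Type*} [CommSemiring R] [Semiring A] [HopfAlgebra R A]

lemma mul_antipodeInv_rTensor_comm_comul {sInv : A →ₗ[R] A}
    (hleft : Function.LeftInverse sInv (antipode R))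
    (hright : Function.RightInverse sInv (antipode R)) :
    LinearMap.mul' R A ∘ₗ sInv.rTensor A ∘ₗ (TensorProduct.comm R A A).toLinearMap ∘ₗ comul
      = Algebra.linearMap R A ∘ₗ counit := by
  ext a
  apply hleft.injective
  rw [LinearMap.comp_apply, LinearMap.comp_apply, LinearMap.comp_apply, ← (ℛ R a).eq]
  simp [map_sum, antipode_mul_antidistrib, hright _, sum_antipode_mul_eq_algebraMap_counit,
    Algebra.algebraMap_eq_smul_one]

lemma sum_antipodeInv_mul_tmul_eq_one_tmul {sInv : A →ₗ[R] A}
    (hleft : Function.LeftInverse sInv (antipode R))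
    (hright : Function.RightInverse sInv (antipode R))
    (a : A) {κ : Type*} [Fintype κ] (a1 a2 a3 : κ → A)
    (ha : TensorProduct.map (comul (R := R)) LinearMap.id (comul a)
        = ∑ i, (a1 i ⊗ₜ[R] a2 i) ⊗ₜ[R] a3 i) :
    ∑ i, (sInv (a3 i) * a2 i) ⊗ₜ[R] a1 i = (1 : A) ⊗ₜ[R] a := by
  let F := TensorProduct.mulLeftBy
    ((Algebra.TensorProduct.includeLeft : A →ₐ[R] A ⊗[R] A).toLinearMap ∘ₗ sInv)
  -- both sides send `x ⊗ (y ⊗ z)` to `s⁻¹(z) y ⊗ x`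
  have hF : F ∘ₗ (TensorProduct.comm R A A).toLinearMap.rTensor A
        ∘ₗ (TensorProduct.assoc R A A A).symm.toLinearMap
      = (TensorProduct.comm R A A).toLinearMap ∘ₗ (LinearMap.mul' R A ∘ₗ sInv.rTensor A
        ∘ₗ (TensorProduct.comm R A A).toLinearMap).lTensor A := by
    ext x y z
    simp [F, Algebra.TensorProduct.tmul_mul_tmul]
  calc ∑ i, (sInv (a3 i) * a2 i) ⊗ₜ[R] a1 i
      = F ((TensorProduct.comm R A A).toLinearMap.rTensor A
          ((TensorProduct.assoc R A A A).symm (comul.lTensor A (comul a)))) := by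
        rw [coassoc_symm_apply, show comul.rTensor A (comul a) = _ from ha]
        simp [F, Algebra.TensorProduct.tmul_mul_tmul]
    _ = TensorProduct.comm R A A ((LinearMap.mul' R A ∘ₗ sInv.rTensor A
          ∘ₗ (TensorProduct.comm R A A).toLinearMap ∘ₗ comul).lTensor A (comul a)) := by
        simpa [LinearMap.lTensor_comp] using LinearMap.congr_fun hF (comul.lTensor A (comul a))
    _ = (1 : A) ⊗ₜ[R] a := by
        rw [mul_antipodeInv_rTensor_comm_comul hleft hright, LinearMap.lTensor_comp,
          LinearMap.comp_apply, lTensor_counit_comul]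
        simp

end HopfAlgebra

/-- Bead push identity 2: `∑ e ⊗ a e' = ∑ s⁻¹(a₃) e a₁ ⊗ e' a₂`. -/
theorem bead_push_two
    {k : Type*} [Field k] {A : Type*} [Ring A] [HopfAlgebra k A]
    {ι : Type*} [Fintype ι] (e e' : ι → A)
    (ρ : A ⊗[k] A) (hρ : ρ = ∑ j, e j ⊗ₜ[k] e' j)
    -- intertwining: ρ Δ(x) = Δᵒᵖ(x) ρ
    (h1 : ∀ x : A, ρ * Coalgebra.comul x
        = (TensorProduct.comm k A A) (Coalgebra.comul x) * ρ)
    (a : A) {κ : Type*} [Fintype κ] (a1 a2 a3 : κ → A)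
    -- Δ²(a) = ∑ i, a₁ ⊗ a₂ ⊗ a₃
    (ha : (TensorProduct.map (Coalgebra.comul (R := k)) LinearMap.id) (Coalgebra.comul a)
        = ∑ i, (a1 i ⊗ₜ[k] a2 i) ⊗ₜ[k] a3 i)
    (sInv : A →ₗ[k] A)
    (hsInv : ∀ x : A, sInv (HopfAlgebra.antipode (R := k) x) = x)
    (hsInv' : ∀ x : A, HopfAlgebra.antipode (R := k) (sInv x) = x) :
    ∑ j, e j ⊗ₜ[k] (a * e' j)
      = ∑ i, ∑ j, (sInv (a3 i) * e j * a1 i) ⊗ₜ[k] (e' j * a2 i) := by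
  let F := TensorProduct.mulLeftBy
    ((Algebra.TensorProduct.includeLeft : A →ₐ[k] A ⊗[k] A).toLinearMap ∘ₗ sInv)
  calc ∑ j, e j ⊗ₜ[k] (a * e' j)
      = ((1 : A) ⊗ₜ[k] a) * ρ := by
        simp [hρ, Finset.mul_sum, Algebra.TensorProduct.tmul_mul_tmul]
    _ = (∑ i, (sInv (a3 i) * a2 i) ⊗ₜ[k] a1 i) * ρ := by
        rw [sum_antipodeInv_mul_tmul_eq_one_tmul hsInv hsInv' a a1 a2 a3 ha]
    _ = F (∑ i, ((a2 i ⊗ₜ[k] a1 i) * ρ) ⊗ₜ[k] a3 i) := by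
        simp [F, Finset.sum_mul, ← mul_assoc, Algebra.TensorProduct.tmul_mul_tmul]
    _ = F (∑ i, (ρ * (a1 i ⊗ₜ[k] a2 i)) ⊗ₜ[k] a3 i) := by
        rw [sum_mul_tmul_tmul_eq_sum_tmul_mul_tmul h1 a a1 a2 a3 ha]
    _ = ∑ i, ∑ j, (sInv (a3 i) * e j * a1 i) ⊗ₜ[k] (e' j * a2 i) := by
        simp [F, hρ, Finset.sum_mul, Finset.mul_sum, mul_assoc,
          Algebra.TensorProduct.tmul_mul_tmul]
end

section
/- In a quasitriangular Hopf algebra A with R-matrix ρ = Σ e⊗e', for all a ∈ A: Σ a·s(e) ⊗ e' = Σ s(e)a₂ ⊗ s⁻¹(a₃)e'a₁. -/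
/-!
Put `ρ̄ = ∑ s(e) ⊗ e' = ρ⁻¹`; inverting the intertwining relation gives `Δ(x) ρ̄ = ρ̄ Δᵒᵖ(x)`.
Hence the right-hand side `∑ (1 ⊗ s⁻¹(a₃)) ρ̄ (a₂ ⊗ a₁)` equals `∑ (1 ⊗ s⁻¹(a₃)) (a₁ ⊗ a₂) ρ̄`.
By coassociativity and `∑ s⁻¹(c₂) c₁ = ε(c)` (apply the anti-multiplicative `s` to both sides),
the factor `∑ a₁ ⊗ s⁻¹(a₃) a₂` collapses to `a ⊗ 1`, leaving `(a ⊗ 1) ρ̄`, the left-hand side.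
-/

open scoped TensorProduct
open Coalgebra HopfAlgebra

namespace HopfAlgebra

variable {R A : Type*} [CommSemiring R] [Semiring A] [HopfAlgebra R A]

lemma antipode_algebraMap (r : R) : antipode R (algebraMap R A r) = algebraMap R A r := by
  rw [Algebra.algebraMap_eq_smul_one, map_smul, antipode_one]

lemma sum_inv_antipode_mul_eq_algebraMap_counit {sInv : A →ₗ[R] A}
    (hleft : Function.LeftInverse sInv (antipode R))
    (hright : Function.RightInverse sInv (antipode R)) {a : A} {ι : Type*} (repr : Repr R a ι) :
    ∑ i ∈ repr.index, sInv (repr.right i) * repr.left i = algebraMap R A (counit a) := by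
  apply hleft.injective
  simp only [map_sum, antipode_mul_antidistrib, hright _, antipode_algebraMap,
    sum_antipode_mul_eq_algebraMap_counit]

lemma sum_tmul_inv_antipode_mul_eq_tmul_one {sInv : A →ₗ[R] A}
    (hleft : Function.LeftInverse sInv (antipode R))
    (hright : Function.RightInverse sInv (antipode R)) {a : A} {κ : Type*} [Fintype κ]
    {a1 a2 a3 : κ → A}
    (ha : TensorProduct.map comul LinearMap.id (comul a) = ∑ i, (a1 i ⊗ₜ[R] a2 i) ⊗ₜ[R] a3 i) :
    ∑ i, a1 i ⊗ₜ[R] (sInv (a3 i) * a2 i) = a ⊗ₜ[R] 1 := by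
  let f : A ⊗[R] A →ₗ[R] A :=
    LinearMap.mul' R A ∘ₗ TensorProduct.map sInv LinearMap.id ∘ₗ
      (TensorProduct.comm R A A).toLinearMap
  have hf : f ∘ₗ comul = Algebra.linearMap R A ∘ₗ counit := by
    ext x
    simpa [f, ← (ℛ R x).eq, map_sum] using
      sum_inv_antipode_mul_eq_algebraMap_counit hleft hright (ℛ R x)
  have h := congrArg (fun t => f.lTensor A (TensorProduct.assoc R A A A t)) ha
  simp only [← LinearMap.rTensor_def, coassoc_apply, ← LinearMap.lTensor_comp_apply, hf] at h
  simpa [f, map_sum, LinearMap.lTensor_comp_apply] using h.symm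

lemma sum_tmul_mul_mul_comm_eq (ρ : A ⊗[R] A)
    (hρ : ∀ x : A, ρ * TensorProduct.comm R A A (comul x) = comul x * ρ) (g : A →ₗ[R] A)
    {t : A ⊗[R] A} {κ : Type*} [Fintype κ] {a1 a2 a3 : κ → A}
    (ht : TensorProduct.map comul LinearMap.id t = ∑ i, (a1 i ⊗ₜ[R] a2 i) ⊗ₜ[R] a3 i) :
    ∑ i, (1 ⊗ₜ[R] g (a3 i)) * (ρ * (a2 i ⊗ₜ[R] a1 i))
      = ∑ i, (1 ⊗ₜ[R] g (a3 i)) * (a1 i ⊗ₜ[R] a2 i) * ρ := by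
  -- `a1 i ⊗ a2 i` need not be a coproduct, so `hρ` is applied through bilinear maps.
  let left : A ⊗[R] A →ₗ[R] A →ₗ[R] A ⊗[R] A :=
    ((LinearMap.mul R (A ⊗[R] A)).flip ∘ₗ LinearMap.mulLeft R ρ ∘ₗ
      (TensorProduct.comm R A A).toLinearMap).compl₂ (TensorProduct.mk R A A 1 ∘ₗ g)
  let right : A ⊗[R] A →ₗ[R] A →ₗ[R] A ⊗[R] A :=
    ((LinearMap.mul R (A ⊗[R] A)).flip ∘ₗ LinearMap.mulRight R ρ).compl₂
      (TensorProduct.mk R A A 1 ∘ₗ g)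
  have hlr : TensorProduct.lift left ∘ₗ TensorProduct.map comul LinearMap.id =
      TensorProduct.lift right ∘ₗ TensorProduct.map comul LinearMap.id := by
    ext x z
    simp [left, right, hρ]
  simpa [ht, left, right, mul_assoc, -Algebra.TensorProduct.tmul_mul_tmul] using
    congrArg (· t) hlr

end HopfAlgebra

theorem bead_push_five_general
    {k : Type*} [Field k] {A : Type*} [Ring A] [HopfAlgebra k A]
    {ι : Type*} [Fintype ι] (e e' : ι → A)
    (ρ : A ⊗[k] A)
    -- intertwining: ρ Δ(x) = Δᵒᵖ(x) ρ
    (h1 : ∀ x : A, ρ * Coalgebra.comul x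
        = (TensorProduct.comm k A A) (Coalgebra.comul x) * ρ)
    (a : A) {κ : Type*} [Fintype κ] (a1 a2 a3 : κ → A)
    -- Δ²(a) = ∑ i, a₁ ⊗ a₂ ⊗ a₃
    (ha : (TensorProduct.map (Coalgebra.comul (R := k)) LinearMap.id) (Coalgebra.comul a)
        = ∑ i, (a1 i ⊗ₜ[k] a2 i) ⊗ₜ[k] a3 i)
    (sInv : A →ₗ[k] A)
    (hsInv : ∀ x : A, sInv (HopfAlgebra.antipode (R := k) x) = x)
    (hsInv' : ∀ x : A, HopfAlgebra.antipode (R := k) (sInv x) = x)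
    -- (s ⊗ 1)ρ = ρ⁻¹
    (hinv : (∑ j, (HopfAlgebra.antipode (R := k) (e j)) ⊗ₜ[k] e' j) * ρ = 1
        ∧ ρ * (∑ j, (HopfAlgebra.antipode (R := k) (e j)) ⊗ₜ[k] e' j) = 1) :
    ∑ j, (a * HopfAlgebra.antipode (R := k) (e j)) ⊗ₜ[k] e' j
      = ∑ i, ∑ j, (HopfAlgebra.antipode (R := k) (e j) * a2 i) ⊗ₜ[k]
          (sInv (a3 i) * e' j * a1 i) := by
  set ρinv := ∑ j, antipode k (e j) ⊗ₜ[k] e' j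
  let u : (A ⊗[k] A)ˣ := ⟨ρ, ρinv, hinv.2, hinv.1⟩
  have hρinv : ∀ x : A, ρinv * TensorProduct.comm k A A (comul x) = comul x * ρinv :=
    fun x => SemiconjBy.units_inv_symm_left (a := u) (h1 x)
  calc ∑ j, (a * antipode k (e j)) ⊗ₜ[k] e' j = (a ⊗ₜ[k] 1) * ρinv := by
        simp [ρinv, Finset.mul_sum, Algebra.TensorProduct.tmul_mul_tmul]
    _ = (∑ i, a1 i ⊗ₜ[k] (sInv (a3 i) * a2 i)) * ρinv := by
        rw [sum_tmul_inv_antipode_mul_eq_tmul_one hsInv hsInv' ha]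
    _ = ∑ i, (1 ⊗ₜ[k] sInv (a3 i)) * (a1 i ⊗ₜ[k] a2 i) * ρinv := by
        simp [Finset.sum_mul, Algebra.TensorProduct.tmul_mul_tmul]
    _ = ∑ i, (1 ⊗ₜ[k] sInv (a3 i)) * (ρinv * (a2 i ⊗ₜ[k] a1 i)) :=
        (sum_tmul_mul_mul_comm_eq ρinv hρinv sInv ha).symm
    _ = _ := by
        simp [ρinv, Finset.sum_mul, Finset.mul_sum, Algebra.TensorProduct.tmul_mul_tmul, mul_assoc]

/-- Bead push identity 5: `∑ a s(e) ⊗ e' = ∑ s(e) a₂ ⊗ s⁻¹(a₃) e' a₁`. -/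
theorem bead_push_five
    {k : Type*} [Field k] {A : Type*} [Ring A] [HopfAlgebra k A]
    {ι : Type*} [Fintype ι] (e e' : ι → A)
    (ρ : A ⊗[k] A) (hρ : ρ = ∑ j, e j ⊗ₜ[k] e' j)
    -- intertwining: ρ Δ(x) = Δᵒᵖ(x) ρ
    (h1 : ∀ x : A, ρ * Coalgebra.comul x
        = (TensorProduct.comm k A A) (Coalgebra.comul x) * ρ)
    (a : A) {κ : Type*} [Fintype κ] (a1 a2 a3 : κ → A)
    -- Δ²(a) = ∑ i, a₁ ⊗ a₂ ⊗ a₃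
    (ha : (TensorProduct.map (Coalgebra.comul (R := k)) LinearMap.id) (Coalgebra.comul a)
        = ∑ i, (a1 i ⊗ₜ[k] a2 i) ⊗ₜ[k] a3 i)
    (sInv : A →ₗ[k] A)
    (hsInv : ∀ x : A, sInv (HopfAlgebra.antipode (R := k) x) = x)
    (hsInv' : ∀ x : A, HopfAlgebra.antipode (R := k) (sInv x) = x)
    -- (s ⊗ 1)ρ = ρ⁻¹
    (hinv : (∑ j, (HopfAlgebra.antipode (R := k) (e j)) ⊗ₜ[k] e' j) * ρ = 1
        ∧ ρ * (∑ j, (HopfAlgebra.antipode (R := k) (e j)) ⊗ₜ[k] e' j) = 1) :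
    ∑ j, (a * HopfAlgebra.antipode (R := k) (e j)) ⊗ₜ[k] e' j
      = ∑ i, ∑ j, (HopfAlgebra.antipode (R := k) (e j) * a2 i) ⊗ₜ[k]
          (sInv (a3 i) * e' j * a1 i) :=
  bead_push_five_general e e' ρ h1 a a1 a2 a3 ha sInv hsInv hsInv' hinv
end

section
/- Let A be a quasitriangular Hopf algebra with R-matrix ρ = Σ e⊗e', augmented by a grouplike element G with s²(x) = GxG⁻¹ for all x. Then the element X = Σ e·s⁻²(e')·G⁻¹ is in the center of A. -/
open scoped TensorProduct
open Coalgebra HopfAlgebra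

/-!
The element `V = ∑ S²(eⱼ) e'ⱼ` is the Drinfeld element of `ρ̂ = (S ⊗ 1)ρ`, which intertwines
`Δᵒᵖ` with `Δ`, so Drinfeld's argument gives `V x = S²(x) V`. No normalisation `(ε ⊗ 1)ρ = 1`
is available: the axiom `(Δ ⊗ 1)ρ = ρ₁₃ρ₂₃` only yields `ρ̂ρ = ρρ̂ = 1 ⊗ c` and `(1 ⊗ c)ρ = ρ`
for the central element `c = (ε ⊗ 1)ρ`, and this is enough to run the argument. Finally `s⁻²`
is multiplicative, so `X = s⁻²(V) G⁻¹ = G⁻¹ V`, which is central because `V x = G x G⁻¹ V`.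
-/

section
variable {k A : Type*} [CommSemiring k] [Semiring A] [HopfAlgebra k A] {κ : Type*}

theorem sum_counit_right_smul {a : A} (𝓡 : Repr k a κ) :
    ∑ i ∈ 𝓡.index, counit (R := k) (𝓡.right i) • 𝓡.left i = a := by
  simpa only [map_sum, TensorProduct.rid_tmul, one_smul] using
    congr(TensorProduct.rid k A $(sum_tmul_counit_eq 𝓡))

theorem sum_antipode_antipode_mul_antipode {a : A} (𝓡 : Repr k a κ) :
    ∑ i ∈ 𝓡.index, antipode k (antipode k (𝓡.right i)) * antipode k (𝓡.left i)
      = counit (R := k) a • 1 := by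
  simp_rw [← antipode_mul_antidistrib, ← map_sum, sum_mul_antipode_eq_smul, map_smul,
    antipode_one]

theorem sum_antipode_antipode_mul_antipode_mul_apply {x : A} {κ₁ : κ → Type*} (r : Repr k x κ)
    (r₁ : ∀ i, Repr k (r.left i) (κ₁ i)) (F : A →ₗ[k] A) :
    ∑ i ∈ r.index, ∑ t ∈ (r₁ i).index,
      antipode k (antipode k (r.right i)) * antipode k ((r₁ i).right t) * F ((r₁ i).left t)
      = F x := by
  let θ : A ⊗[k] A →ₗ[k] A :=
    antipode k ∘ₗ LinearMap.mul' k A ∘ₗ (antipode k).lTensor A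
  let Ψ : A ⊗[k] (A ⊗[k] A) →ₗ[k] A :=
    TensorProduct.lift (((LinearMap.mul k A).flip ∘ₗ F).compl₂ θ)
  -- regroup as `x₍₁₎ ⊗ Δ(x₍₂₎)`, where `θ` contracts `S(x₍₂₎ S(x₍₃₎))` to `ε(x₍₂₎)`
  have := congr(Ψ $(sum_tmul_tmul_eq r r₁ fun i => ℛ k (r.right i)))
  simp only [map_sum, Ψ, θ, TensorProduct.lift.tmul, LinearMap.compl₂_apply, LinearMap.comp_apply,
    LinearMap.flip_apply, LinearMap.mul_apply', LinearMap.lTensor_tmul, LinearMap.mul'_apply,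
    antipode_mul_antidistrib] at this
  rw [this]
  simp_rw [← Finset.sum_mul, sum_antipode_antipode_mul_antipode, smul_mul_assoc, one_mul,
    ← map_smul, ← map_sum, sum_counit_right_smul]

/-- Drinfeld's proof of `u x = S²(x) u` for `u = ∑ S(aⱼ) bⱼ`, where `∑ aⱼ ⊗ bⱼ` intertwines `Δᵒᵖ`
with `Δ` only up to a central `c`. -/
theorem drinfeld_mul_mul_eq {ι : Type*} [Fintype ι] (a b : ι → A) {c : A}
    (hc : ∀ y, Commute c y)
    (h : ∀ x, (∑ j, a j ⊗ₜ[k] b j) * TensorProduct.comm k A A (comul x) * (1 ⊗ₜ c)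
      = (1 ⊗ₜ c) * comul x * ∑ j, a j ⊗ₜ[k] b j) (x : A) :
    (∑ j, antipode k (a j) * b j) * x * c
      = antipode k (antipode k x) * (∑ j, antipode k (a j) * b j) * c := by
  set ρ := ∑ j, a j ⊗ₜ[k] b j
  set u := ∑ j, antipode k (a j) * b j
  let φ : A ⊗[k] A →ₗ[k] A := LinearMap.mul' k A ∘ₗ (antipode k).rTensor A
  have hφ_comm_comul : ∀ y, φ (ρ * TensorProduct.comm k A A (comul y) * (1 ⊗ₜ c))
      = ∑ t ∈ (ℛ k y).index, antipode k ((ℛ k y).right t) * (u * ((ℛ k y).left t * c)) := by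
    intro y
    rw [← (ℛ k y).eq]
    simp only [map_sum, TensorProduct.comm_tmul, Finset.mul_sum, Finset.sum_mul,
      Algebra.TensorProduct.tmul_mul_tmul, φ, LinearMap.comp_apply, LinearMap.rTensor_tmul,
      LinearMap.mul'_apply, antipode_mul_antidistrib, mul_one, ρ, u, mul_assoc]
  have hφ_sandwich : ∀ (t : A ⊗[k] A) (p q : A),
      φ ((1 ⊗ₜ c) * t * (p ⊗ₜ q)) = antipode k p * c * φ t * q := by
    intro t p q
    induction t with
    | zero => simp
    | tmul x y =>
      simp only [φ, Algebra.TensorProduct.tmul_mul_tmul, LinearMap.comp_apply,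
        LinearMap.rTensor_tmul, LinearMap.mul'_apply, antipode_mul_antidistrib, one_mul,
        mul_assoc, (hc _).left_comm]
    | add t₁ t₂ h₁ h₂ => simp only [mul_add, add_mul, map_add, h₁, h₂]
  have hφ_comul : ∀ y, φ ((1 ⊗ₜ c) * comul y * ρ) = counit (R := k) y • (u * c) := by
    intro y
    have hΔ : φ (comul y) = counit (R := k) y • 1 := by
      rw [← Algebra.algebraMap_eq_smul_one]; exact mul_antipode_rTensor_comul_apply y
    simp only [ρ, Finset.mul_sum, map_sum, hφ_sandwich, hΔ, u, Finset.sum_mul, Finset.smul_sum]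
    refine Finset.sum_congr rfl fun j _ => ?_
    rw [mul_smul_comm, mul_one, smul_mul_assoc, mul_assoc, mul_assoc, (hc _).eq]
  let r := ℛ k x
  calc u * x * c
      = ∑ i ∈ r.index, ∑ t ∈ (ℛ k (r.left i)).index, antipode k (antipode k (r.right i))
          * antipode k ((ℛ k (r.left i)).right t) * (u * ((ℛ k (r.left i)).left t * c)) :=
        by rw [mul_assoc]; exact (sum_antipode_antipode_mul_antipode_mul_apply r
          (fun i => ℛ k (r.left i)) (LinearMap.mulLeft k u ∘ₗ LinearMap.mulRight k c)).symm
    _ = ∑ i ∈ r.index, antipode k (antipode k (r.right i))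
          * φ (ρ * TensorProduct.comm k A A (comul (r.left i)) * (1 ⊗ₜ c)) := by
        simp_rw [hφ_comm_comul, Finset.mul_sum, mul_assoc]
    _ = ∑ i ∈ r.index,
          counit (R := k) (r.left i) • antipode k (antipode k (r.right i)) * (u * c) := by
        simp_rw [h, hφ_comul, mul_smul_comm, smul_mul_assoc]
    _ = antipode k (antipode k x) * u * c := by
        rw [← Finset.sum_mul, ← mul_assoc]
        simp_rw [← map_smul]
        rw [← map_sum, ← map_sum, sum_counit_smul]

section QuasiTriangular
variable {ι : Type*} [Fintype ι] (e e' : ι → A)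

theorem commute_sum_counit_smul
    (h1 : ∀ x : A, (∑ j, e j ⊗ₜ[k] e' j) * comul x
      = TensorProduct.comm k A A (comul x) * ∑ j, e j ⊗ₜ[k] e' j) (y : A) :
    Commute (∑ j, counit (R := k) (e j) • e' j) y := by
  let E : A ⊗[k] A →ₐ[k] A := (Algebra.TensorProduct.lid k A).toAlgHom.comp
    (Algebra.TensorProduct.map (Bialgebra.counitAlgHom k A) (AlgHom.id k A))
  have hE : ∀ p q : A, E (p ⊗ₜ q) = counit (R := k) p • q := by simp [E]
  have := congr(E $(h1 y))
  rw [← (ℛ k y).eq] at this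
  simp only [map_mul, map_sum, TensorProduct.comm_tmul, hE, sum_counit_smul,
    sum_counit_right_smul] at this
  exact this

theorem sum_map_comul_tmul_eq
    (h3 : ∑ j, TensorProduct.assoc k A A A (comul (e j) ⊗ₜ[k] e' j)
      = (∑ j, e j ⊗ₜ[k] ((1 : A) ⊗ₜ[k] e' j)) * ∑ j, (1 : A) ⊗ₜ[k] (e j ⊗ₜ[k] e' j))
    (φ : A ⊗[k] A →ₗ[k] A) :
    ∑ j, φ (comul (e j)) ⊗ₜ[k] e' j = ∑ i, ∑ j, φ (e i ⊗ₜ e j) ⊗ₜ[k] (e' i * e' j) := by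
  have := congr(φ.rTensor A ((TensorProduct.assoc k A A A).symm $h3))
  simpa [map_sum, Finset.sum_mul_sum, Algebra.TensorProduct.tmul_mul_tmul] using this

theorem sum_antipode_antipode_mul_mul_eq
    (h1 : ∀ x : A, (∑ j, e j ⊗ₜ[k] e' j) * comul x
      = TensorProduct.comm k A A (comul x) * ∑ j, e j ⊗ₜ[k] e' j)
    (h3 : ∑ j, TensorProduct.assoc k A A A (comul (e j) ⊗ₜ[k] e' j)
      = (∑ j, e j ⊗ₜ[k] ((1 : A) ⊗ₜ[k] e' j)) * ∑ j, (1 : A) ⊗ₜ[k] (e j ⊗ₜ[k] e' j))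
    (x : A) :
    (∑ j, antipode k (antipode k (e j)) * e' j) * x
      = antipode k (antipode k x) * ∑ j, antipode k (antipode k (e j)) * e' j := by
  set ρ := ∑ j, e j ⊗ₜ[k] e' j
  set ρ' := ∑ j, antipode k (e j) ⊗ₜ[k] e' j
  set c := ∑ j, counit (R := k) (e j) • e' j
  set V := ∑ j, antipode k (antipode k (e j)) * e' j
  have hc : ∀ y, Commute c y := commute_sum_counit_smul e e' h1
  have hcontract := sum_map_comul_tmul_eq e e' h3
  have hρ'ρ : ρ' * ρ = 1 ⊗ₜ c := by
    have := hcontract (LinearMap.mul' k A ∘ₗ (antipode k).rTensor A)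
    simp only [LinearMap.comp_apply, LinearMap.rTensor_tmul, LinearMap.mul'_apply,
      mul_antipode_rTensor_comul_apply, Algebra.algebraMap_eq_smul_one, TensorProduct.smul_tmul,
      ← TensorProduct.tmul_sum] at this
    rw [this, Finset.sum_mul_sum]
    simp only [Algebra.TensorProduct.tmul_mul_tmul]
  have hρρ' : ρ * ρ' = 1 ⊗ₜ c := by
    have := hcontract (LinearMap.mul' k A ∘ₗ (antipode k).lTensor A)
    simp only [LinearMap.comp_apply, LinearMap.lTensor_tmul, LinearMap.mul'_apply,
      mul_antipode_lTensor_comul_apply, Algebra.algebraMap_eq_smul_one, TensorProduct.smul_tmul,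
      ← TensorProduct.tmul_sum] at this
    rw [this, Finset.sum_mul_sum]
    simp only [Algebra.TensorProduct.tmul_mul_tmul]
  have hcρ : (1 ⊗ₜ c) * ρ = ρ := by
    have := hcontract (TensorProduct.lid k A ∘ₗ counit.rTensor A)
    simp only [LinearMap.comp_apply, rTensor_counit_comul, LinearMap.rTensor_tmul,
      LinearEquiv.coe_coe, TensorProduct.lid_tmul, one_smul, TensorProduct.smul_tmul] at this
    rw [Finset.sum_comm] at this
    simp only [← TensorProduct.tmul_sum, ← Finset.sum_mul, ← smul_mul_assoc] at this
    simp only [ρ, Finset.mul_sum, Algebra.TensorProduct.tmul_mul_tmul, one_mul]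
    exact this.symm
  have hVc : V * c = V := by
    have := congr(LinearMap.mul' k A ((antipode k ∘ₗ antipode k).rTensor A $hcρ))
    simp only [ρ, Finset.mul_sum, map_sum, Algebra.TensorProduct.tmul_mul_tmul, one_mul,
      LinearMap.rTensor_tmul, LinearMap.comp_apply, LinearMap.mul'_apply] at this
    rw [Finset.sum_mul]
    exact (Finset.sum_congr rfl fun j _ => by rw [mul_assoc, (hc _).eq]).trans this
  have hρ' : ∀ y, ρ' * TensorProduct.comm k A A (comul y) * (1 ⊗ₜ c)
      = (1 ⊗ₜ c) * comul y * ρ' := by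
    intro y
    calc ρ' * TensorProduct.comm k A A (comul y) * (1 ⊗ₜ c)
        = ρ' * (TensorProduct.comm k A A (comul y) * ρ) * ρ' := by rw [← hρρ']; noncomm_ring
      _ = (1 ⊗ₜ c) * comul y * ρ' := by rw [← h1, ← hρ'ρ]; noncomm_ring
  calc V * x = c * (V * x) := by rw [← mul_assoc, (hc V).eq, hVc]
    _ = V * x * c := (hc _).eq
    _ = antipode k (antipode k x) * V * c := drinfeld_mul_mul_eq _ _ hc hρ' x
    _ = antipode k (antipode k x) * V := by rw [mul_assoc, hVc]
end QuasiTriangular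

theorem mul_antidistrib_of_inverse_antipode {T : A → A} (hT : ∀ x, T (antipode k x) = x)
    (hT' : ∀ x, antipode k (T x) = x) (p q : A) : T (p * q) = T q * T p :=
  calc T (p * q) = T (antipode k (T q * T p)) := by rw [antipode_mul_antidistrib, hT', hT']
    _ = T q * T p := hT _
end

theorem centrality_of_curl_element_general
    {k : Type*} [Field k] {A : Type*} [Ring A] [HopfAlgebra k A]
    {ι : Type*} [Fintype ι] (e e' : ι → A)
    (ρ : A ⊗[k] A) (hρ : ρ = ∑ j, e j ⊗ₜ[k] e' j)
    -- intertwining: ρ Δ(x) = Δᵒᵖ(x) ρ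
    (h1 : ∀ x : A, ρ * Coalgebra.comul x
        = (TensorProduct.comm k A A) (Coalgebra.comul x) * ρ)
    -- (Δ ⊗ 1)ρ = ρ₁₃ ρ₂₃
    (h3 : ∑ j, (TensorProduct.assoc k A A A) ((Coalgebra.comul (R := k) (e j)) ⊗ₜ[k] e' j)
        = (∑ j, e j ⊗ₜ[k] ((1 : A) ⊗ₜ[k] e' j)) * (∑ j, (1 : A) ⊗ₜ[k] (e j ⊗ₜ[k] e' j)))
    (sInv : A →ₗ[k] A)
    (hsInv : ∀ x : A, sInv (HopfAlgebra.antipode (R := k) x) = x)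
    (hsInv' : ∀ x : A, HopfAlgebra.antipode (R := k) (sInv x) = x)
    (G Ginv : A) (hG' : Ginv * G = 1)
    (hs2 : ∀ x : A, HopfAlgebra.antipode (R := k) (HopfAlgebra.antipode (R := k) x)
        = G * x * Ginv) :
    ∀ a : A, a * ((∑ j, e j * sInv (sInv (e' j))) * Ginv)
      = ((∑ j, e j * sInv (sInv (e' j))) * Ginv) * a := by
  intro a
  subst hρ
  set V := ∑ j, antipode k (antipode k (e j)) * e' j
  have hV : ∀ x, V * x = antipode k (antipode k x) * V :=
    sum_antipode_antipode_mul_mul_eq e e' h1 h3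
  have hsInv_mul := mul_antidistrib_of_inverse_antipode hsInv hsInv'
  have hX : (∑ j, e j * sInv (sInv (e' j))) * Ginv = Ginv * V := by
    have hv : ∑ j, e j * sInv (sInv (e' j)) = sInv (sInv V) := by
      simp only [V, map_sum, hsInv_mul, hsInv]
    calc (∑ j, e j * sInv (sInv (e' j))) * Ginv = Ginv * (G * sInv (sInv V) * Ginv) := by
          rw [hv, ← mul_assoc, ← mul_assoc, hG', one_mul]
      _ = Ginv * V := by rw [← hs2, hsInv', hsInv']
  rw [hX]
  calc a * (Ginv * V) = Ginv * G * a * Ginv * V := by rw [hG', one_mul, ← mul_assoc]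
    _ = Ginv * (antipode k (antipode k a) * V) := by rw [hs2]; simp only [mul_assoc]
    _ = Ginv * V * a := by rw [← hV, mul_assoc]

/-- In a quasitriangular Hopf algebra augmented by a grouplike `G` with `s²(x) = G x G⁻¹`,
the element `X = ∑ e * s⁻²(e') * G⁻¹` is central. -/
theorem centrality_of_curl_element
    {k : Type*} [Field k] {A : Type*} [Ring A] [HopfAlgebra k A]
    {ι : Type*} [Fintype ι] (e e' : ι → A)
    (ρ : A ⊗[k] A) (hρ : ρ = ∑ j, e j ⊗ₜ[k] e' j)
    -- intertwining: ρ Δ(x) = Δᵒᵖ(x) ρ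
    (h1 : ∀ x : A, ρ * Coalgebra.comul x
        = (TensorProduct.comm k A A) (Coalgebra.comul x) * ρ)
    -- (1 ⊗ Δ)ρ = ρ₁₃ ρ₁₂
    (h2 : ∑ j, e j ⊗ₜ[k] (Coalgebra.comul (R := k) (e' j))
        = (∑ j, e j ⊗ₜ[k] ((1 : A) ⊗ₜ[k] e' j)) * (∑ j, e j ⊗ₜ[k] (e' j ⊗ₜ[k] (1 : A))))
    -- (Δ ⊗ 1)ρ = ρ₁₃ ρ₂₃
    (h3 : ∑ j, (TensorProduct.assoc k A A A) ((Coalgebra.comul (R := k) (e j)) ⊗ₜ[k] e' j)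
        = (∑ j, e j ⊗ₜ[k] ((1 : A) ⊗ₜ[k] e' j)) * (∑ j, (1 : A) ⊗ₜ[k] (e j ⊗ₜ[k] e' j)))
    (sInv : A →ₗ[k] A)
    (hsInv : ∀ x : A, sInv (HopfAlgebra.antipode (R := k) x) = x)
    (hsInv' : ∀ x : A, HopfAlgebra.antipode (R := k) (sInv x) = x)
    (G Ginv : A) (hG : G * Ginv = 1) (hG' : Ginv * G = 1)
    (hGgrp : Coalgebra.comul (R := k) G = G ⊗ₜ[k] G) (hGε : Coalgebra.counit (R := k) G = 1)
    (hs2 : ∀ x : A, HopfAlgebra.antipode (R := k) (HopfAlgebra.antipode (R := k) x)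
        = G * x * Ginv) :
    ∀ a : A, a * ((∑ j, e j * sInv (sInv (e' j))) * Ginv)
      = ((∑ j, e j * sInv (sInv (e' j))) * Ginv) * a :=
  centrality_of_curl_element_general e e' ρ hρ h1 h3 sInv hsInv hsInv' G Ginv hG' hs2
end

section
/- In a quasitriangular Hopf algebra, (s⊗s)ρ = ρ, where ρ is the R-matrix and s the antipode. -/
/-!
Applying the counit to one leg of `(Δ ⊗ 1)ρ = ρ₁₃ρ₂₃` and `(1 ⊗ Δ)ρ = ρ₁₃ρ₁₂` and cancelling
the unit `ρ` gives `(ε ⊗ 1)ρ = 1 = (1 ⊗ ε)ρ`. Contracting the first identity with the antipode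
axiom `S(x₁)x₂ = ε(x)` then shows that `ρ' = (S ⊗ 1)ρ` is the inverse of `ρ`. Hence
`(1 ⊗ Δ)ρ' = ρ₁₂⁻¹ρ₁₃⁻¹ = ρ'₁₂ρ'₁₃`, and contracting this with `x₁S(x₂) = ε(x)` gives
`ρ' · (S ⊗ S)ρ = 1`, so `(S ⊗ S)ρ = ρ'⁻¹ = ρ`.
-/

open scoped TensorProduct
open Coalgebra HopfAlgebra

namespace Quasitriangular

variable {k A : Type*} [CommSemiring k] [Semiring A] [HopfAlgebra k A]

noncomputable def leg₁₂ : A ⊗[k] A →ₐ[k] A ⊗[k] (A ⊗[k] A) :=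
  Algebra.TensorProduct.map (AlgHom.id k A) Algebra.TensorProduct.includeLeft

noncomputable def leg₁₃ : A ⊗[k] A →ₐ[k] A ⊗[k] (A ⊗[k] A) :=
  Algebra.TensorProduct.map (AlgHom.id k A) Algebra.TensorProduct.includeRight

@[simp] lemma leg₁₂_tmul (x y : A) : leg₁₂ (x ⊗ₜ[k] y) = x ⊗ₜ[k] (y ⊗ₜ[k] (1 : A)) := rfl

@[simp] lemma leg₁₃_tmul (x y : A) : leg₁₃ (x ⊗ₜ[k] y) = x ⊗ₜ[k] ((1 : A) ⊗ₜ[k] y) := rfl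

section Counit

variable (B : Type*) [Semiring B] [Algebra k B]

noncomputable def counitLeft : A ⊗[k] B →ₐ[k] B :=
  (Algebra.TensorProduct.lid k B).toAlgHom.comp
    (Algebra.TensorProduct.map (Bialgebra.counitAlgHom k A) (AlgHom.id k B))

noncomputable def counitRight : B ⊗[k] A →ₐ[k] B :=
  (Algebra.TensorProduct.rid k k B).toAlgHom.comp
    (Algebra.TensorProduct.map (AlgHom.id k B) (Bialgebra.counitAlgHom k A))

variable {B}

lemma counitLeft_apply (t : A ⊗[k] B) :
    counitLeft B t = TensorProduct.lid k B (counit.rTensor B t) := rfl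

lemma counitRight_apply (t : B ⊗[k] A) :
    counitRight B t = TensorProduct.rid k B (counit.lTensor B t) := rfl

@[simp] lemma counitLeft_tmul (a : A) (b : B) :
    counitLeft B (a ⊗ₜ[k] b) = counit (R := k) a • b := by
  simp [counitLeft]

@[simp] lemma counitRight_tmul (b : B) (a : A) :
    counitRight B (b ⊗ₜ[k] a) = counit (R := k) a • b := by
  simp [counitRight]

lemma counitLeft_assoc_rTensor_comul (t : A ⊗[k] B) :
    counitLeft (A ⊗[k] B) (TensorProduct.assoc k A A B (comul.rTensor B t)) = t := by
  induction t using TensorProduct.induction_on with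
  | zero => simp
  | tmul a b =>
    have key : ∀ s : A ⊗[k] A, counitLeft (A ⊗[k] B) (TensorProduct.assoc k A A B (s ⊗ₜ b)) =
        counitLeft A s ⊗ₜ b := by
      intro s
      induction s using TensorProduct.induction_on with
      | zero => simp
      | tmul x y => simp [TensorProduct.smul_tmul']
      | add s₁ s₂ h₁ h₂ => simp only [TensorProduct.add_tmul, map_add, h₁, h₂]
    simp [key, counitLeft_apply, rTensor_counit_comul]
  | add t₁ t₂ h₁ h₂ => simp only [map_add, h₁, h₂]

end Counit

lemma counitRight_comp_comulAlgHom :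
    (counitRight A).comp (Bialgebra.comulAlgHom k A) = AlgHom.id k A := by
  ext a
  simp [counitRight_apply, lTensor_counit_comul]

lemma map_counitRight_map_comulAlgHom (t : A ⊗[k] A) :
    Algebra.TensorProduct.map (AlgHom.id k A) (counitRight A)
      (Algebra.TensorProduct.map (AlgHom.id k A) (Bialgebra.comulAlgHom k A) t) = t := by
  rw [← AlgHom.comp_apply, ← Algebra.TensorProduct.map_comp, counitRight_comp_comulAlgHom,
    AlgHom.comp_id, Algebra.TensorProduct.map_id, AlgHom.id_apply]

lemma counitLeft_leg₁₃ (t : A ⊗[k] A) :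
    counitLeft (A ⊗[k] A) (leg₁₃ t) = 1 ⊗ₜ counitLeft A t := by
  induction t using TensorProduct.induction_on with
  | zero => simp
  | tmul x y => simp
  | add t₁ t₂ h₁ h₂ => simp only [map_add, h₁, h₂, TensorProduct.tmul_add]

lemma map_counitRight_leg₁₃ (t : A ⊗[k] A) :
    Algebra.TensorProduct.map (AlgHom.id k A) (counitRight A) (leg₁₃ t) =
      counitRight A t ⊗ₜ 1 := by
  induction t using TensorProduct.induction_on with
  | zero => simp
  | tmul x y => simp [TensorProduct.smul_tmul']
  | add t₁ t₂ h₁ h₂ => simp only [map_add, h₁, h₂, TensorProduct.add_tmul]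

lemma map_counitRight_leg₁₂ (t : A ⊗[k] A) :
    Algebra.TensorProduct.map (AlgHom.id k A) (counitRight A) (leg₁₂ t) = t := by
  induction t using TensorProduct.induction_on with
  | zero => simp
  | tmul x y => simp
  | add t₁ t₂ h₁ h₂ => simp only [map_add, h₁, h₂]

lemma counitLeft_rmatrix {ρ : A ⊗[k] A} (hρ : IsUnit ρ)
    (hcomul₁ : TensorProduct.assoc k A A A (comul.rTensor A ρ) = leg₁₃ ρ * (1 ⊗ₜ ρ)) :
    counitLeft A ρ = 1 := by
  have hmul : (1 ⊗ₜ counitLeft A ρ) * ρ = ρ := by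
    simpa [counitLeft_assoc_rTensor_comul, counitLeft_leg₁₃] using
      (congrArg (counitLeft (A ⊗[k] A)) hcomul₁).symm
  have hone : (1 : A) ⊗ₜ[k] counitLeft A ρ = 1 := (hρ.mul_eq_right).mp hmul
  simpa using congrArg (counitLeft A) hone

lemma counitRight_rmatrix {ρ : A ⊗[k] A} (hρ : IsUnit ρ)
    (hcomul₂ : Algebra.TensorProduct.map (AlgHom.id k A) (Bialgebra.comulAlgHom k A) ρ =
      leg₁₃ ρ * leg₁₂ ρ) :
    counitRight A ρ = 1 := by
  have hmul : (counitRight A ρ ⊗ₜ 1) * ρ = ρ := by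
    have := congrArg (Algebra.TensorProduct.map (AlgHom.id k A) (counitRight A)) hcomul₂
    rwa [map_mul, map_counitRight_leg₁₃, map_counitRight_leg₁₂,
      map_counitRight_map_comulAlgHom, eq_comm] at this
  have hone : counitRight A ρ ⊗ₜ[k] (1 : A) = 1 := (hρ.mul_eq_right).mp hmul
  simpa using congrArg (counitRight A) hone

noncomputable def antipodeMul₁₂ : A ⊗[k] (A ⊗[k] A) →ₗ[k] A ⊗[k] A :=
  (LinearMap.mul' k A ∘ₗ (antipode k).rTensor A).rTensor A ∘ₗ
    (TensorProduct.assoc k A A A).symm.toLinearMap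

noncomputable def mulAntipode₂₃ : A ⊗[k] (A ⊗[k] A) →ₗ[k] A ⊗[k] A :=
  (LinearMap.mul' k A ∘ₗ (antipode k).lTensor A).lTensor A

@[simp] lemma antipodeMul₁₂_tmul (x y z : A) :
    antipodeMul₁₂ (x ⊗ₜ[k] (y ⊗ₜ[k] z)) = (antipode k x * y) ⊗ₜ z := by
  simp [antipodeMul₁₂]

@[simp] lemma mulAntipode₂₃_tmul (x y z : A) :
    mulAntipode₂₃ (x ⊗ₜ[k] (y ⊗ₜ[k] z)) = x ⊗ₜ (y * antipode k z) := by
  simp [mulAntipode₂₃]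

lemma antipodeMul₁₂_leg₁₃_mul (a b : A ⊗[k] A) :
    antipodeMul₁₂ (leg₁₃ a * (1 ⊗ₜ b)) = (antipode k).rTensor A a * b := by
  induction a using TensorProduct.induction_on with
  | zero => simp
  | tmul x y =>
    induction b using TensorProduct.induction_on with
    | zero => simp
    | tmul x' y' => simp
    | add b₁ b₂ h₁ h₂ => simp only [TensorProduct.tmul_add, mul_add, map_add, h₁, h₂]
  | add a₁ a₂ h₁ h₂ => simp only [map_add, add_mul, h₁, h₂]

lemma mulAntipode₂₃_leg₁₂_mul_leg₁₃ (a b : A ⊗[k] A) :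
    mulAntipode₂₃ (leg₁₂ a * leg₁₃ b) = a * (antipode k).lTensor A b := by
  induction a using TensorProduct.induction_on with
  | zero => simp
  | tmul x y =>
    induction b using TensorProduct.induction_on with
    | zero => simp
    | tmul x' y' => simp
    | add b₁ b₂ h₁ h₂ => simp only [mul_add, map_add, h₁, h₂]
  | add a₁ a₂ h₁ h₂ => simp only [map_add, add_mul, h₁, h₂]

lemma antipodeMul₁₂_assoc_rTensor_comul (t : A ⊗[k] A) :
    antipodeMul₁₂ (TensorProduct.assoc k A A A (comul.rTensor A t)) = 1 ⊗ₜ counitLeft A t := by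
  induction t using TensorProduct.induction_on with
  | zero => simp
  | tmul a b =>
    have h : antipodeMul₁₂ (TensorProduct.assoc k A A A (comul a ⊗ₜ b)) =
        LinearMap.mul' k A ((antipode k).rTensor A (comul a)) ⊗ₜ b := by
      simp [antipodeMul₁₂]
    simp [h, Algebra.algebraMap_eq_smul_one, TensorProduct.smul_tmul]
  | add t₁ t₂ h₁ h₂ => simp only [map_add, h₁, h₂, TensorProduct.tmul_add]

lemma mulAntipode₂₃_map_comulAlgHom (t : A ⊗[k] A) :
    mulAntipode₂₃ (Algebra.TensorProduct.map (AlgHom.id k A) (Bialgebra.comulAlgHom k A) t) =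
      counitRight A t ⊗ₜ 1 := by
  induction t using TensorProduct.induction_on with
  | zero => simp
  | tmul a b =>
    have h : mulAntipode₂₃ (a ⊗ₜ[k] comul b) =
        a ⊗ₜ LinearMap.mul' k A ((antipode k).lTensor A (comul b)) := by
      simp [mulAntipode₂₃]
    simp [h, Algebra.algebraMap_eq_smul_one, TensorProduct.smul_tmul']
  | add t₁ t₂ h₁ h₂ => simp only [map_add, h₁, h₂, TensorProduct.add_tmul]

lemma counitRight_rTensor_antipode (t : A ⊗[k] A) :
    counitRight A ((antipode k).rTensor A t) = antipode k (counitRight A t) := by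
  induction t using TensorProduct.induction_on with
  | zero => simp
  | tmul a b => simp
  | add t₁ t₂ h₁ h₂ => simp only [map_add, h₁, h₂]

lemma antipode_rTensor_rmatrix_mul_rmatrix {ρ : A ⊗[k] A} (hρ : IsUnit ρ)
    (hcomul₁ : TensorProduct.assoc k A A A (comul.rTensor A ρ) = leg₁₃ ρ * (1 ⊗ₜ ρ)) :
    (antipode k).rTensor A ρ * ρ = 1 := by
  have := congrArg antipodeMul₁₂ hcomul₁
  rwa [antipodeMul₁₂_assoc_rTensor_comul, counitLeft_rmatrix hρ hcomul₁,
    antipodeMul₁₂_leg₁₃_mul, ← Algebra.TensorProduct.one_def, eq_comm] at this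

theorem map_antipode_antipode_rmatrix {ρ : A ⊗[k] A} (hρ : IsUnit ρ)
    (hcomul₁ : TensorProduct.assoc k A A A (comul.rTensor A ρ) = leg₁₃ ρ * (1 ⊗ₜ ρ))
    (hcomul₂ : Algebra.TensorProduct.map (AlgHom.id k A) (Bialgebra.comulAlgHom k A) ρ =
      leg₁₃ ρ * leg₁₂ ρ) :
    TensorProduct.map (antipode k) (antipode k) ρ = ρ := by
  set ρ' := (antipode k).rTensor A ρ with hρ'
  have hleft : ρ' * ρ = 1 := antipode_rTensor_rmatrix_mul_rmatrix hρ hcomul₁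
  have hright : ρ * ρ' = 1 := hρ.isRegular.right.mul_eq_one_symm hleft
  have hcomul₂' : Algebra.TensorProduct.map (AlgHom.id k A) (Bialgebra.comulAlgHom k A) ρ' =
      leg₁₂ ρ' * leg₁₃ ρ' := by
    refine left_inv_eq_right_inv (a := leg₁₃ ρ * leg₁₂ ρ) ?_ ?_
    · rw [← hcomul₂, ← map_mul, hleft, map_one]
    · rw [mul_assoc, ← mul_assoc (leg₁₂ ρ), ← map_mul, hright, map_one, one_mul, ← map_mul,
        hright, map_one]
  have hinv : ρ' * TensorProduct.map (antipode k) (antipode k) ρ = 1 := by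
    have := congrArg mulAntipode₂₃ hcomul₂'
    rwa [mulAntipode₂₃_map_comulAlgHom, mulAntipode₂₃_leg₁₂_mul_leg₁₃,
      counitRight_rTensor_antipode, counitRight_rmatrix hρ hcomul₂, antipode_one,
      ← Algebra.TensorProduct.one_def, hρ', ← LinearMap.comp_apply,
      LinearMap.lTensor_comp_rTensor, eq_comm] at this
  exact (left_inv_eq_right_inv hright hinv).symm

end Quasitriangular

theorem antipode_tensor_antipode_rmatrix_general
    {k : Type*} [Field k] {A : Type*} [Ring A] [HopfAlgebra k A]
    {ι : Type*} [Fintype ι] (e e' : ι → A)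
    (ρ : A ⊗[k] A) (hρ : ρ = ∑ j, e j ⊗ₜ[k] e' j)
    -- (1 ⊗ Δ)ρ = ρ₁₃ ρ₁₂
    (h2 : ∑ j, e j ⊗ₜ[k] (Coalgebra.comul (R := k) (e' j))
        = (∑ j, e j ⊗ₜ[k] ((1 : A) ⊗ₜ[k] e' j)) * (∑ j, e j ⊗ₜ[k] (e' j ⊗ₜ[k] (1 : A))))
    -- (Δ ⊗ 1)ρ = ρ₁₃ ρ₂₃
    (h3 : ∑ j, (TensorProduct.assoc k A A A) ((Coalgebra.comul (R := k) (e j)) ⊗ₜ[k] e' j)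
        = (∑ j, e j ⊗ₜ[k] ((1 : A) ⊗ₜ[k] e' j)) * (∑ j, (1 : A) ⊗ₜ[k] (e j ⊗ₜ[k] e' j)))
    (hρinv : IsUnit ρ) :
    TensorProduct.map (HopfAlgebra.antipode (R := k)) (HopfAlgebra.antipode (R := k)) ρ = ρ := by
  subst hρ
  refine Quasitriangular.map_antipode_antipode_rmatrix hρinv ?_ ?_
  · simpa [map_sum, TensorProduct.tmul_sum] using h3
  · simpa [map_sum] using h2

/-- In a quasitriangular Hopf algebra, `(s ⊗ s)ρ = ρ`. -/
theorem antipode_tensor_antipode_rmatrix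
    {k : Type*} [Field k] {A : Type*} [Ring A] [HopfAlgebra k A]
    {ι : Type*} [Fintype ι] (e e' : ι → A)
    (ρ : A ⊗[k] A) (hρ : ρ = ∑ j, e j ⊗ₜ[k] e' j)
    -- intertwining: ρ Δ(x) = Δᵒᵖ(x) ρ
    (h1 : ∀ x : A, ρ * Coalgebra.comul x
        = (TensorProduct.comm k A A) (Coalgebra.comul x) * ρ)
    -- (1 ⊗ Δ)ρ = ρ₁₃ ρ₁₂
    (h2 : ∑ j, e j ⊗ₜ[k] (Coalgebra.comul (R := k) (e' j))
        = (∑ j, e j ⊗ₜ[k] ((1 : A) ⊗ₜ[k] e' j)) * (∑ j, e j ⊗ₜ[k] (e' j ⊗ₜ[k] (1 : A))))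
    -- (Δ ⊗ 1)ρ = ρ₁₃ ρ₂₃
    (h3 : ∑ j, (TensorProduct.assoc k A A A) ((Coalgebra.comul (R := k) (e j)) ⊗ₜ[k] e' j)
        = (∑ j, e j ⊗ₜ[k] ((1 : A) ⊗ₜ[k] e' j)) * (∑ j, (1 : A) ⊗ₜ[k] (e j ⊗ₜ[k] e' j)))
    (hρinv : IsUnit ρ) :
    TensorProduct.map (HopfAlgebra.antipode (R := k)) (HopfAlgebra.antipode (R := k)) ρ = ρ :=
  antipode_tensor_antipode_rmatrix_general e e' ρ hρ h2 h3 hρinv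
end
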